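/- arXiv:2601.02335 — 2 statements merged into one kernel-verified Lean document; each statement's English description precedes it below -/
import Mathlib

section
/- Let β ∈ (1, 2), let G, L be positive integers, and let V₁ = {(m₁, m₂) ∈ (GZ × LZ) \ {0} : |m₁| ≤ |m₂|^{1/β}}. Then Σ_{m ∈ V₁} |m₂|^{−2−2/β} ≤ C(β) L^{−2−2/β} (1 + L^{1/β}/G) for some constant C(β) depending only on β. In particular, if G ≥ L^{1/β} then Σ_{m ∈ V₁} |m₂|^{−2−2/β} ≤ C'(β) L^{−2−2/β}. -/
open scoped Classical ENNReal

private lemma aux_tsum_le {ι : Type*} (f : ι → ℝ) (hf : ∀ i, 0 ≤ f i) (B : ℝ) (hB : 0 ≤ B)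
    (h : ∑' i, ENNReal.ofReal (f i) ≤ ENNReal.ofReal B) : ∑' i, f i ≤ B := by
  by_cases hs : Summable f
  · rw [← ENNReal.ofReal_tsum_of_nonneg hf hs] at h
    exact (ENNReal.ofReal_le_ofReal_iff hB).mp h
  · rw [tsum_eq_zero_of_not_summable hs]; exact hB

private lemma aux_count (c : ℝ≥0∞) (R : ℝ) (hR : 0 ≤ R) (G : ℕ) (hG : 0 < G) :
    (∑' k : ℤ, if |(((G : ℤ) * k : ℤ) : ℝ)| ≤ R then c else 0) ≤
      ENNReal.ofReal (2 * R / G + 1) * c := by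
  have hGR : (0 : ℝ) < G := Nat.cast_pos.mpr hG
  set D : ℤ := ⌊R / G⌋ with hD
  have hD0 : 0 ≤ D := Int.floor_nonneg.mpr (by positivity)
  have key : ∀ k : ℤ, (|(((G : ℤ) * k : ℤ) : ℝ)| ≤ R ↔ k ∈ Finset.Icc (-D) D) := by
    intro k
    have h1 : |(((G : ℤ) * k : ℤ) : ℝ)| ≤ R ↔ (|k| : ℝ) ≤ R / G := by
      push_cast
      rw [abs_mul, abs_of_nonneg hGR.le, le_div_iff₀ hGR, mul_comm]
    have h2 : (|(k : ℝ)| ≤ R / G) ↔ |k| ≤ D := by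
      rw [hD, Int.le_floor, Int.cast_abs]
    rw [Finset.mem_Icc, ← abs_le]
    exact h1.trans h2
  have hzero : ∀ k : ℤ, k ∉ Finset.Icc (-D) D →
      (if |(((G : ℤ) * k : ℤ) : ℝ)| ≤ R then c else 0) = 0 := by
    intro k hk
    rw [if_neg (fun hc => hk ((key k).mp hc))]
  rw [tsum_eq_sum hzero]
  have hcard : ((Finset.Icc (-D) D).card : ℝ≥0∞) ≤ ENNReal.ofReal (2 * R / G + 1) := by
    rw [← ENNReal.ofReal_natCast]
    apply ENNReal.ofReal_le_ofReal
    rw [Int.card_Icc]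
    have h1 : (((D + 1 - -D).toNat : ℤ) : ℝ) ≤ 2 * R / G + 1 := by
      rw [Int.toNat_of_nonneg (by omega)]
      have hfl := Int.floor_le (R / (G : ℝ))
      rw [← hD] at hfl
      push_cast
      have h2 : 2 * (R / G) = 2 * R / G := by ring
      linarith
    exact_mod_cast h1
  calc (∑ k ∈ Finset.Icc (-D) D, if |(((G : ℤ) * k : ℤ) : ℝ)| ≤ R then c else 0)
      ≤ (Finset.Icc (-D) D).card • c := by
        apply Finset.sum_le_card_nsmul
        intro x _
        split_ifs <;> simp
    _ = ((Finset.Icc (-D) D).card : ℝ≥0∞) * c := by rw [nsmul_eq_mul]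
    _ ≤ ENNReal.ofReal (2 * R / G + 1) * c := mul_le_mul_left hcard c

theorem lattice_sum_V1 (β : ℝ) (hβ : β ∈ Set.Ioo (1 : ℝ) 2) :
    (∃ C > (0 : ℝ), ∀ G L : ℕ, 0 < G → 0 < L →
      (∑' m : ℤ × ℤ,
        if (G : ℤ) ∣ m.1 ∧ (L : ℤ) ∣ m.2 ∧ m ≠ 0 ∧ (|m.1| : ℝ) ≤ (|m.2| : ℝ) ^ (1 / β)
        then (|m.2| : ℝ) ^ (-2 - 2 / β) else 0) ≤
      C * (L : ℝ) ^ (-2 - 2 / β) * (1 + (L : ℝ) ^ (1 / β) / G)) ∧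
    (∃ C' > (0 : ℝ), ∀ G L : ℕ, 0 < G → 0 < L → (L : ℝ) ^ (1 / β) ≤ G →
      (∑' m : ℤ × ℤ,
        if (G : ℤ) ∣ m.1 ∧ (L : ℤ) ∣ m.2 ∧ m ≠ 0 ∧ (|m.1| : ℝ) ≤ (|m.2| : ℝ) ^ (1 / β)
        then (|m.2| : ℝ) ^ (-2 - 2 / β) else 0) ≤
      C' * (L : ℝ) ^ (-2 - 2 / β)) := by
  obtain ⟨hβ1, hβ2⟩ := hβ
  have hβ0 : (0 : ℝ) < β := by linarith
  have hβi : (0 : ℝ) < 1 / β := by positivity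
  have h2βp : (0 : ℝ) < 2 / β := by positivity
  have hexp1 : (-2 - 2 / β : ℝ) < -1 := by linarith
  have hexp2 : (-2 - 1 / β : ℝ) < -1 := by linarith
  have hs1 : Summable (fun n : ℕ => ((n : ℝ) + 1) ^ (-2 - 2 / β)) := by
    have := (summable_nat_add_iff (f := fun n : ℕ => (n : ℝ) ^ (-2 - 2 / β)) 1).mpr
      (Real.summable_nat_rpow.mpr hexp1)
    simpa using this
  have hs2 : Summable (fun n : ℕ => ((n : ℝ) + 1) ^ (-2 - 1 / β)) := by
    have := (summable_nat_add_iff (f := fun n : ℕ => (n : ℝ) ^ (-2 - 1 / β)) 1).mpr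
      (Real.summable_nat_rpow.mpr hexp2)
    simpa using this
  set T₁ : ℝ := ∑' n : ℕ, ((n : ℝ) + 1) ^ (-2 - 2 / β) with hT₁
  set T₂ : ℝ := ∑' n : ℕ, ((n : ℝ) + 1) ^ (-2 - 1 / β) with hT₂
  have hT₁0 : 0 ≤ T₁ := tsum_nonneg fun n => Real.rpow_nonneg (by positivity) _
  have hT₂0 : 0 ≤ T₂ := tsum_nonneg fun n => Real.rpow_nonneg (by positivity) _
  set C₀ : ℝ := 2 * T₁ + 4 * T₂ + 1 with hC₀
  have hC₀0 : 0 < C₀ := by positivity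
  have key : ∀ G L : ℕ, 0 < G → 0 < L →
      (∑' m : ℤ × ℤ,
        if (G : ℤ) ∣ m.1 ∧ (L : ℤ) ∣ m.2 ∧ m ≠ 0 ∧ (|m.1| : ℝ) ≤ (|m.2| : ℝ) ^ (1 / β)
        then (|m.2| : ℝ) ^ (-2 - 2 / β) else 0) ≤
      C₀ * (L : ℝ) ^ (-2 - 2 / β) * (1 + (L : ℝ) ^ (1 / β) / G) := by
    intro G L hG hL
    have hGR : (0 : ℝ) < G := Nat.cast_pos.mpr hG
    have hLR : (0 : ℝ) < L := Nat.cast_pos.mpr hL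
    set f : ℤ × ℤ → ℝ := fun m =>
      if (G : ℤ) ∣ m.1 ∧ (L : ℤ) ∣ m.2 ∧ m ≠ 0 ∧ (|m.1| : ℝ) ≤ (|m.2| : ℝ) ^ (1 / β)
      then (|m.2| : ℝ) ^ (-2 - 2 / β) else 0 with hf
    have hfnn : ∀ m, 0 ≤ f m := by
      intro m; rw [hf]; dsimp only
      split_ifs
      · exact Real.rpow_nonneg (by positivity) _
      · exact le_rfl
    have hBnn : 0 ≤ C₀ * (L : ℝ) ^ (-2 - 2 / β) * (1 + (L : ℝ) ^ (1 / β) / G) := by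
      have h1 : (0:ℝ) ≤ (L : ℝ) ^ (-2 - 2 / β) := Real.rpow_nonneg hLR.le _
      have h2 : (0:ℝ) ≤ (L : ℝ) ^ (1 / β) / G := by positivity
      exact mul_nonneg (mul_nonneg hC₀0.le h1) (by linarith)
    apply aux_tsum_le f hfnn _ hBnn
    set e : ℤ × ℤ → ℤ × ℤ := fun q => ((G : ℤ) * q.1, (L : ℤ) * q.2) with he'
    have hGz : ((G : ℤ)) ≠ 0 := by exact_mod_cast hG.ne'
    have hLz : ((L : ℤ)) ≠ 0 := by exact_mod_cast hL.ne'
    have he : Function.Injective e := by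
      intro a b hab
      rw [he', Prod.ext_iff] at hab
      obtain ⟨h1, h2⟩ := hab
      exact Prod.ext (mul_left_cancel₀ hGz h1) (mul_left_cancel₀ hLz h2)
    have hsupp : Function.support (fun m => ENNReal.ofReal (f m)) ⊆ Set.range e := by
      intro m hm
      simp only [Function.mem_support, ne_eq, ENNReal.ofReal_eq_zero, not_le] at hm
      have hcond : (G : ℤ) ∣ m.1 ∧ (L : ℤ) ∣ m.2 ∧ m ≠ 0 ∧
          (|m.1| : ℝ) ≤ (|m.2| : ℝ) ^ (1 / β) := by
        by_contra hc
        rw [hf] at hm; simp only [if_neg hc] at hm; exact absurd hm (by norm_num)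
      obtain ⟨⟨k, hk⟩, ⟨n, hn⟩, -, -⟩ := hcond
      exact ⟨(k, n), by rw [he']; exact (Prod.ext hk.symm hn.symm)⟩
    rw [← he.tsum_eq hsupp]
    set Φ : ℤ × ℤ → ℝ≥0∞ := fun q =>
      if |(((G : ℤ) * q.1 : ℤ) : ℝ)| ≤ |(((L : ℤ) * q.2 : ℤ) : ℝ)| ^ (1 / β)
      then ENNReal.ofReal (|(((L : ℤ) * q.2 : ℤ) : ℝ)| ^ (-2 - 2 / β)) else 0 with hΦ'
    have hΦle : ∀ q : ℤ × ℤ, ENNReal.ofReal (f (e q)) ≤ Φ q := by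
      intro q
      rw [hf, hΦ', he']
      dsimp only
      split_ifs with h1 h2 h2
      · exact le_rfl
      · exact absurd h1.2.2.2 h2
      · simp
      · simp
    refine le_trans (ENNReal.tsum_le_tsum hΦle) ?_
    rw [ENNReal.tsum_prod', ENNReal.tsum_comm]
    have hline : ∀ n : ℤ, (∑' k : ℤ, Φ (k, n)) ≤
        ENNReal.ofReal ((2 * (|(((L : ℤ) * n : ℤ) : ℝ)| ^ (1 / β)) / G + 1) *
          |(((L : ℤ) * n : ℤ) : ℝ)| ^ (-2 - 2 / β)) := by
      intro n
      have hRnn : 0 ≤ |(((L : ℤ) * n : ℤ) : ℝ)| ^ (1 / β) := Real.rpow_nonneg (by positivity) _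
      have hcnt := aux_count (ENNReal.ofReal (|(((L : ℤ) * n : ℤ) : ℝ)| ^ (-2 - 2 / β)))
        (|(((L : ℤ) * n : ℤ) : ℝ)| ^ (1 / β)) hRnn G hG
      refine le_trans (le_of_eq ?_) (le_trans hcnt (le_of_eq ?_))
      · simp only [hΦ']
      · rw [← ENNReal.ofReal_mul (by positivity)]
    refine le_trans (ENNReal.tsum_le_tsum hline) ?_
    set Ψ : ℤ → ℝ≥0∞ := fun n =>
      ENNReal.ofReal ((2 * (|(((L : ℤ) * n : ℤ) : ℝ)| ^ (1 / β)) / G + 1) *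
        |(((L : ℤ) * n : ℤ) : ℝ)| ^ (-2 - 2 / β)) with hΨ'
    have hΨ0 : Ψ 0 = 0 := by
      rw [hΨ']
      simp only [mul_zero, abs_zero, Int.cast_zero]
      rw [Real.zero_rpow (by linarith : (-2 - 2 / β : ℝ) ≠ 0), mul_zero, ENNReal.ofReal_zero]
    have hΨsym : ∀ n : ℕ, Ψ (-((n : ℤ) + 1)) = Ψ ((n : ℤ) + 1) := by
      intro n
      have h : |(((L : ℤ) * (-((n : ℤ) + 1)) : ℤ) : ℝ)| = |(((L : ℤ) * ((n : ℤ) + 1) : ℤ) : ℝ)| := by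
        push_cast
        rw [mul_neg, abs_neg]
      rw [hΨ']
      dsimp only
      rw [h]
    have hsplit : (∑' n : ℤ, Ψ n) = 2 * ∑' n : ℕ, Ψ ((n : ℤ) + 1) := by
      rw [tsum_of_nat_of_neg_add_one ENNReal.summable ENNReal.summable,
        tsum_eq_zero_add' ENNReal.summable]
      have h0 : Ψ (((0 : ℕ) : ℤ)) = 0 := by
        rw [show ((0 : ℕ) : ℤ) = 0 by norm_num]; exact hΨ0
      have e1 : (∑' n : ℕ, Ψ (-((n : ℤ) + 1))) = ∑' n : ℕ, Ψ ((n : ℤ) + 1) :=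
        tsum_congr fun n => hΨsym n
      have e2 : (∑' n : ℕ, Ψ (((n + 1 : ℕ) : ℤ))) = ∑' n : ℕ, Ψ ((n : ℤ) + 1) :=
        tsum_congr fun n => by norm_cast
      rw [h0, zero_add, e1, e2, two_mul]
    rw [hsplit]
    set a : ℕ → ℝ := fun n =>
      (2 * (((L : ℝ) * ((n : ℝ) + 1)) ^ (1 / β)) / G + 1) *
        ((L : ℝ) * ((n : ℝ) + 1)) ^ (-2 - 2 / β) with ha'
    have habs : ∀ n : ℕ, |(((L : ℤ) * ((n : ℤ) + 1) : ℤ) : ℝ)| = (L : ℝ) * ((n : ℝ) + 1) := by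
      intro n
      push_cast
      rw [abs_of_pos (mul_pos hLR (by positivity))]
    have hΨa : ∀ n : ℕ, Ψ ((n : ℤ) + 1) = ENNReal.ofReal (a n) := by
      intro n
      rw [hΨ']
      dsimp only
      rw [habs n]
    have ha : ∀ n : ℕ, a n = (L : ℝ) ^ (-2 - 2 / β) * ((n : ℝ) + 1) ^ (-2 - 2 / β) +
        (2 / G) * ((L : ℝ) ^ (-2 - 1 / β) * ((n : ℝ) + 1) ^ (-2 - 1 / β)) := by
      intro n
      have hX : (0 : ℝ) < (L : ℝ) * ((n : ℝ) + 1) := by positivity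
      have hn1 : (0 : ℝ) ≤ (n : ℝ) + 1 := by positivity
      have e3 : ((L : ℝ) * ((n : ℝ) + 1)) ^ (1 / β) * ((L : ℝ) * ((n : ℝ) + 1)) ^ (-2 - 2 / β)
          = ((L : ℝ) * ((n : ℝ) + 1)) ^ (-2 - 1 / β) := by
        rw [← Real.rpow_add hX]
        congr 1
        ring
      have e1 : ((L : ℝ) * ((n : ℝ) + 1)) ^ (-2 - 2 / β)
          = (L : ℝ) ^ (-2 - 2 / β) * ((n : ℝ) + 1) ^ (-2 - 2 / β) :=
        Real.mul_rpow hLR.le hn1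
      have e2 : ((L : ℝ) * ((n : ℝ) + 1)) ^ (-2 - 1 / β)
          = (L : ℝ) ^ (-2 - 1 / β) * ((n : ℝ) + 1) ^ (-2 - 1 / β) :=
        Real.mul_rpow hLR.le hn1
      calc a n = 2 / G * (((L : ℝ) * ((n : ℝ) + 1)) ^ (1 / β) *
              ((L : ℝ) * ((n : ℝ) + 1)) ^ (-2 - 2 / β)) +
            ((L : ℝ) * ((n : ℝ) + 1)) ^ (-2 - 2 / β) := by rw [ha']; ring
        _ = _ := by rw [e3, e1, e2]; ring
    have hann : ∀ n, 0 ≤ a n := by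
      intro n
      rw [ha']
      have q1 := Real.rpow_nonneg (by positivity : (0:ℝ) ≤ (L : ℝ) * ((n : ℝ) + 1)) (-2 - 2 / β)
      have q2 := Real.rpow_nonneg (by positivity : (0:ℝ) ≤ (L : ℝ) * ((n : ℝ) + 1)) (1 / β)
      positivity
    have hsa : Summable a := by
      rw [summable_congr ha]
      exact ((hs1.mul_left _).add ((hs2.mul_left _).mul_left _))
    have htsa : ∑' n, a n = (L : ℝ) ^ (-2 - 2 / β) * T₁ +
        (2 / G) * ((L : ℝ) ^ (-2 - 1 / β) * T₂) := by
      rw [tsum_congr ha, Summable.tsum_add (hs1.mul_left _) ((hs2.mul_left _).mul_left _),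
        tsum_mul_left, tsum_mul_left, tsum_mul_left]
    calc (2 : ℝ≥0∞) * ∑' n : ℕ, Ψ ((n : ℤ) + 1)
        = 2 * ∑' n : ℕ, ENNReal.ofReal (a n) := by rw [tsum_congr hΨa]
      _ = ENNReal.ofReal (2 * ∑' n, a n) := by
          rw [← ENNReal.ofReal_tsum_of_nonneg hann hsa,
            ENNReal.ofReal_mul (by norm_num : (0:ℝ) ≤ 2), ENNReal.ofReal_ofNat]
      _ ≤ ENNReal.ofReal (C₀ * (L : ℝ) ^ (-2 - 2 / β) * (1 + (L : ℝ) ^ (1 / β) / G)) := by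
          apply ENNReal.ofReal_le_ofReal
          rw [htsa]
          have hLsplit : (L : ℝ) ^ (-2 - 1 / β) = (L : ℝ) ^ (-2 - 2 / β) * (L : ℝ) ^ (1 / β) := by
            rw [← Real.rpow_add hLR]
            congr 1
            ring
          rw [hLsplit]
          set u : ℝ := (L : ℝ) ^ (-2 - 2 / β) with hu'
          set v : ℝ := (L : ℝ) ^ (1 / β) with hv'
          have hu : 0 ≤ u := Real.rpow_nonneg hLR.le _
          have hv : 0 ≤ v := Real.rpow_nonneg hLR.le _
          have hh1 : 2 * T₁ * u ≤ C₀ * u :=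
            mul_le_mul_of_nonneg_right (by rw [hC₀]; linarith) hu
          have hh2 : 4 * T₂ * (u * (v / G)) ≤ C₀ * (u * (v / G)) :=
            mul_le_mul_of_nonneg_right (by rw [hC₀]; linarith) (by positivity)
          have expand1 : 2 * (u * T₁ + 2 / (G:ℝ) * (u * v * T₂)) =
              2 * T₁ * u + 4 * T₂ * (u * (v / G)) := by
            field_simp
            ring
          have expand2 : C₀ * u * (1 + v / (G:ℝ)) = C₀ * u + C₀ * (u * (v / G)) := by ring
          rw [expand1, expand2]
          exact add_le_add hh1 hh2
  refine ⟨⟨C₀, hC₀0, key⟩, ⟨2 * C₀, by linarith, ?_⟩⟩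
  intro G L hG hL hGL
  have hGR : (0 : ℝ) < G := Nat.cast_pos.mpr hG
  have hLR : (0 : ℝ) < L := Nat.cast_pos.mpr hL
  refine le_trans (key G L hG hL) ?_
  have h1 : (1 : ℝ) + (L : ℝ) ^ (1 / β) / G ≤ 2 := by
    have : (L : ℝ) ^ (1 / β) / G ≤ 1 := (div_le_one hGR).mpr hGL
    linarith
  have h2 : (0 : ℝ) ≤ (L : ℝ) ^ (-2 - 2 / β) := Real.rpow_nonneg hLR.le _
  have h4 : C₀ * (L : ℝ) ^ (-2 - 2 / β) * (1 + (L : ℝ) ^ (1 / β) / G) ≤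
      C₀ * (L : ℝ) ^ (-2 - 2 / β) * 2 :=
    mul_le_mul_of_nonneg_left h1 (mul_nonneg hC₀0.le h2)
  exact h4.trans (le_of_eq (by ring))
end

section
/- Let β ∈ (1, 2), θ₀ ∈ (0, 1], and let G, L be positive integers with G ≥ L. Set V₂ = {(m₁, m₂) ∈ (GZ × LZ) : |m₂|^{1/β} < |m₁| ≤ θ₀|m₂|}. Then Σ_{m ∈ V₂} |m₁|^{(2−β)/(β−1)} |m₂|^{(1−2β)/(β−1)} ≤ C(β, θ₀) G^{−2} L^{−1} for some constant C(β, θ₀). -/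
/-!
On `V₂` we have `G ≤ |m₁| ≤ |m₂|`, and the exponents `a = (2-β)/(β-1) ≥ 0` and
`b = (1-2β)/(β-1)` satisfy `a + b = -3`, so each term is at most
`|m₂|^(-3) ≤ |m₁|^(-3/2) |m₂|^(-3/2)`. The sum is therefore dominated by the product of two
one-dimensional lattice tails, `∑_{m₁ ∈ Gℤ, |m₁| ≥ G} |m₁|^(-3/2) ≤ 6 G^(-3/2)` and
`∑_{m₂ ∈ Lℤ, |m₂| ≥ G} |m₂|^(-3/2) ≤ 6 L⁻¹ G^(-1/2)`, both instances of the integral-test bound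
`∑_{x ∈ dℤ, |x| ≥ t} |x|^(-s) ≤ 2s/(s-1) · d⁻¹ t^(1-s)`.
-/

open Real Set

lemma tsum_nat_add_rpow_neg_le {s : ℝ} (hs : 1 < s) {N : ℕ} (hN : 0 < N) :
    ∑' i : ℕ, ((i + N : ℕ) : ℝ) ^ (-s) ≤ s / (s - 1) * (N : ℝ) ^ (1 - s) := by
  have hN1 : (1 : ℝ) ≤ N := by exact_mod_cast hN
  have hsum : Summable fun i : ℕ => ((i + N : ℕ) : ℝ) ^ (-s) :=
    (summable_nat_add_iff N).mpr (summable_nat_rpow.mpr (by linarith))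
  have htail : ∑' i : ℕ, ((i + 1 + N : ℕ) : ℝ) ^ (-s) ≤ (N : ℝ) ^ (1 - s) / (s - 1) := by
    have hanti : AntitoneOn (fun x : ℝ => x ^ (-s)) (Ici (N : ℝ)) := fun a ha b _ hab =>
      rpow_le_rpow_of_nonpos (by linarith [mem_Ici.mp ha]) hab (by linarith)
    have h := hanti.tsum_comp_add_le_integral N
      (integrableOn_Ioi_rpow_of_lt (by linarith) (by linarith))
      (fun x hx => rpow_nonneg (by linarith [mem_Ioi.mp hx]) _)
    rw [integral_Ioi_rpow_of_lt (by linarith) (by linarith)] at h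
    convert h using 1
    · simp only [add_right_comm]
    · rw [show -s + 1 = 1 - s by ring, neg_div, ← div_neg, neg_sub]
  have hhead : (N : ℝ) ^ (-s) ≤ (N : ℝ) ^ (1 - s) :=
    rpow_le_rpow_of_exponent_le hN1 (by linarith)
  calc ∑' i : ℕ, ((i + N : ℕ) : ℝ) ^ (-s)
      = (N : ℝ) ^ (-s) + ∑' i : ℕ, ((i + 1 + N : ℕ) : ℝ) ^ (-s) := by
        rw [hsum.tsum_eq_zero_add, zero_add]
    _ ≤ (N : ℝ) ^ (1 - s) + (N : ℝ) ^ (1 - s) / (s - 1) := add_le_add hhead htail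
    _ = s / (s - 1) * (N : ℝ) ^ (1 - s) := by
        field_simp [show s - 1 ≠ 0 by linarith]; ring

lemma tsum_nat_rpow_neg_tail_le {s t : ℝ} (hs : 1 < s) (ht : 0 < t) :
    ∑' n : ℕ, (if t ≤ n then (n : ℝ) ^ (-s) else 0) ≤ s / (s - 1) * t ^ (1 - s) := by
  set N := ⌈t⌉₊
  have hsupp : Function.support (fun n : ℕ => if t ≤ n then (n : ℝ) ^ (-s) else 0) ⊆
      range (· + N) := by
    intro n hn
    have htn : t ≤ n := by by_contra h; exact hn (if_neg h)
    exact ⟨n - N, Nat.sub_add_cancel (Nat.ceil_le.mpr htn)⟩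
  rw [← (add_left_injective N).tsum_eq hsupp]
  calc ∑' i : ℕ, (if t ≤ ((i + N : ℕ) : ℝ) then ((i + N : ℕ) : ℝ) ^ (-s) else 0)
      = ∑' i : ℕ, ((i + N : ℕ) : ℝ) ^ (-s) :=
        tsum_congr fun i => if_pos ((Nat.le_ceil t).trans (by exact_mod_cast Nat.le_add_left N i))
    _ ≤ s / (s - 1) * (N : ℝ) ^ (1 - s) := tsum_nat_add_rpow_neg_le hs (Nat.ceil_pos.mpr ht)
    _ ≤ s / (s - 1) * t ^ (1 - s) :=
        mul_le_mul_of_nonneg_left (rpow_le_rpow_of_nonpos ht (Nat.le_ceil t) (by linarith))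
          (div_nonneg (by linarith) (by linarith))

lemma tsum_int_rpow_neg_tail_le {s t : ℝ} (hs : 1 < s) (ht : 0 < t) :
    ∑' k : ℤ, (if t ≤ |(k : ℝ)| then |(k : ℝ)| ^ (-s) else 0) ≤
      2 * (s / (s - 1)) * t ^ (1 - s) := by
  set g : ℕ → ℝ := fun n => if t ≤ n then (n : ℝ) ^ (-s) else 0
  have hg0 : ∀ n, 0 ≤ g n := fun n => by simp only [g]; split_ifs <;> positivity
  have hg : Summable g := (summable_nat_rpow.mpr (by linarith : -s < -1)).of_nonneg_of_le hg0
    fun n => by simp only [g]; split_ifs; exacts [le_rfl, by positivity]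
  have hnat : ∀ n : ℕ, (if t ≤ |((n : ℤ) : ℝ)| then |((n : ℤ) : ℝ)| ^ (-s) else 0) = g n :=
    fun n => by simp [g]
  have hneg : ∀ n : ℕ, (if t ≤ |((-(n + 1) : ℤ) : ℝ)| then |((-(n + 1) : ℤ) : ℝ)| ^ (-s) else 0)
      = g (n + 1) := fun n => by
    simp only [g]; push_cast; rw [abs_neg, abs_of_nonneg (by positivity)]
  rw [tsum_of_nat_of_neg_add_one (by simpa only [hnat] using hg)
    (by simpa only [hneg] using (summable_nat_add_iff 1).mpr hg),
    tsum_congr hnat, tsum_congr hneg]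
  have hshift : ∑' n, g (n + 1) ≤ ∑' n, g n :=
    tsum_comp_le_tsum_of_inj hg hg0 (add_left_injective 1)
  linarith [tsum_nat_rpow_neg_tail_le hs ht]

noncomputable def latticeTail (s : ℝ) (d : ℕ) (t : ℝ) (x : ℤ) : ℝ :=
  if (d : ℤ) ∣ x ∧ t ≤ |(x : ℝ)| then |(x : ℝ)| ^ (-s) else 0

lemma latticeTail_nonneg (s : ℝ) (d : ℕ) (t : ℝ) (x : ℤ) : 0 ≤ latticeTail s d t x := by
  unfold latticeTail; split_ifs <;> positivity

lemma summable_latticeTail {s : ℝ} (hs : 1 < s) (d : ℕ) (t : ℝ) :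
    Summable (latticeTail s d t) :=
  (summable_abs_int_rpow hs).of_nonneg_of_le (latticeTail_nonneg s d t) fun x => by
    unfold latticeTail; split_ifs; exacts [le_rfl, by positivity]

lemma tsum_latticeTail_le {s t : ℝ} (hs : 1 < s) {d : ℕ} (hd : 0 < d) (ht : 0 < t) :
    ∑' x, latticeTail s d t x ≤ 2 * (s / (s - 1)) * (d : ℝ)⁻¹ * t ^ (1 - s) := by
  have hd' : (0 : ℝ) < d := by exact_mod_cast hd
  have hsupp : Function.support (latticeTail s d t) ⊆ range ((d : ℤ) * ·) := fun x hx => by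
    have hdvd : (d : ℤ) ∣ x := by by_contra h; exact hx (if_neg fun h' => h h'.1)
    obtain ⟨k, rfl⟩ := hdvd
    exact ⟨k, rfl⟩
  have hterm : ∀ k : ℤ, latticeTail s d t (d * k) =
      (d : ℝ) ^ (-s) * (if t / d ≤ |(k : ℝ)| then |(k : ℝ)| ^ (-s) else 0) := fun k => by
    have habs : |(((d : ℤ) * k : ℤ) : ℝ)| = d * |(k : ℝ)| := by
      push_cast; rw [abs_mul, Nat.abs_cast]
    simp only [latticeTail, habs, dvd_mul_right, true_and, div_le_iff₀' hd', mul_ite, mul_zero,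
      mul_rpow hd'.le (abs_nonneg _)]
  have hpow : (d : ℝ) ^ (-s) / (d : ℝ) ^ (1 - s) = (d : ℝ)⁻¹ := by
    rw [← rpow_sub hd', show -s - (1 - s) = -1 by ring, rpow_neg_one]
  rw [← (mul_right_injective₀ (Int.natCast_ne_zero.mpr hd.ne')).tsum_eq hsupp, tsum_congr hterm,
    tsum_mul_left]
  calc (d : ℝ) ^ (-s) * ∑' k : ℤ, (if t / d ≤ |(k : ℝ)| then |(k : ℝ)| ^ (-s) else 0)
      ≤ (d : ℝ) ^ (-s) * (2 * (s / (s - 1)) * (t / d) ^ (1 - s)) :=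
        mul_le_mul_of_nonneg_left (tsum_int_rpow_neg_tail_le hs (div_pos ht hd')) (by positivity)
    _ = 2 * (s / (s - 1)) * (d : ℝ)⁻¹ * t ^ (1 - s) := by
        rw [div_rpow ht.le hd'.le, ← hpow]; ring

lemma rpow_mul_rpow_le_rpow_mul_rpow {x y a b c : ℝ} (hx : 0 < x) (hxy : x ≤ y) (ha : 0 ≤ a)
    (hc : c ≤ 0) (habc : a + b = c + c) : x ^ a * y ^ b ≤ x ^ c * y ^ c := by
  have hy : 0 < y := hx.trans_le hxy
  calc x ^ a * y ^ b ≤ y ^ a * y ^ b := by gcongr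
    _ = y ^ c * y ^ c := by rw [← rpow_add hy, habc, rpow_add hy]
    _ ≤ x ^ c * y ^ c := by gcongr ?_ * _; exact rpow_le_rpow_of_nonpos hx hxy hc

noncomputable def v2Term (β θ₀ : ℝ) (G L : ℕ) (m : ℤ × ℤ) : ℝ :=
  if (G : ℤ) ∣ m.1 ∧ (L : ℤ) ∣ m.2 ∧
      (|m.2| : ℝ) ^ (1 / β) < (|m.1| : ℝ) ∧ (|m.1| : ℝ) ≤ θ₀ * |m.2|
  then (|m.1| : ℝ) ^ ((2 - β) / (β - 1)) * (|m.2| : ℝ) ^ ((1 - 2 * β) / (β - 1))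
  else 0

lemma v2Term_nonneg (β θ₀ : ℝ) (G L : ℕ) (m : ℤ × ℤ) : 0 ≤ v2Term β θ₀ G L m := by
  unfold v2Term; split_ifs <;> positivity

lemma v2Term_le_latticeTail_mul {β θ₀ : ℝ} (hβ₁ : 1 < β) (hβ₂ : β ≤ 2) (hθ : θ₀ ≤ 1)
    (G L : ℕ) (m : ℤ × ℤ) :
    v2Term β θ₀ G L m ≤ latticeTail (3 / 2) G G m.1 * latticeTail (3 / 2) L G m.2 := by
  unfold v2Term
  split_ifs with h
  · obtain ⟨hG, hL, hlow, hup⟩ := h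
    push_cast at hlow hup ⊢
    have hx : 0 < |(m.1 : ℝ)| := (rpow_nonneg (abs_nonneg _) _).trans_lt hlow
    have hxy : |(m.1 : ℝ)| ≤ |(m.2 : ℝ)| := hup.trans (mul_le_of_le_one_left (abs_nonneg _) hθ)
    have hGx : (G : ℝ) ≤ |(m.1 : ℝ)| := by
      rw [← Int.cast_abs]
      exact_mod_cast Int.le_of_dvd (by exact_mod_cast hx) ((dvd_abs _ _).mpr hG)
    have hA : latticeTail (3 / 2) G G m.1 = |(m.1 : ℝ)| ^ (-(3 / 2) : ℝ) := if_pos ⟨hG, hGx⟩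
    have hB : latticeTail (3 / 2) L G m.2 = |(m.2 : ℝ)| ^ (-(3 / 2) : ℝ) :=
      if_pos ⟨hL, hGx.trans hxy⟩
    rw [hA, hB]
    refine rpow_mul_rpow_le_rpow_mul_rpow hx hxy (div_nonneg (by linarith) (by linarith))
      (by norm_num) ?_
    rw [← add_div, div_eq_iff (by linarith)]
    ring
  · exact mul_nonneg (latticeTail_nonneg _ _ _ _) (latticeTail_nonneg _ _ _ _)

theorem lattice_sum_V2 (β θ₀ : ℝ) (hβ : β ∈ Set.Ioo (1 : ℝ) 2) (hθ : θ₀ ∈ Set.Ioc (0 : ℝ) 1) :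
    ∃ C > (0 : ℝ), ∀ G L : ℕ, 0 < G → 0 < L → L ≤ G →
      (∑' m : ℤ × ℤ,
        if (G : ℤ) ∣ m.1 ∧ (L : ℤ) ∣ m.2 ∧
            (|m.2| : ℝ) ^ (1 / β) < (|m.1| : ℝ) ∧ (|m.1| : ℝ) ≤ θ₀ * |m.2|
        then (|m.1| : ℝ) ^ ((2 - β) / (β - 1)) * (|m.2| : ℝ) ^ ((1 - 2 * β) / (β - 1))
        else 0) ≤ C / ((G : ℝ) ^ 2 * L) := by
  refine ⟨36, by norm_num, fun G L hG hL _ => ?_⟩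
  have hs : (1 : ℝ) < 3 / 2 := by norm_num
  have hGR : (0 : ℝ) < G := by exact_mod_cast hG
  have hbound := v2Term_le_latticeTail_mul hβ.1 hβ.2.le hθ.2 G L
  have hprod :
      Summable fun m : ℤ × ℤ => latticeTail (3 / 2) G G m.1 * latticeTail (3 / 2) L G m.2 :=
    (summable_latticeTail hs G G).mul_of_nonneg (summable_latticeTail hs L G)
      (latticeTail_nonneg _ _ _) (latticeTail_nonneg _ _ _)
  have hG2 : (G : ℝ) ^ (1 - 3 / 2 : ℝ) * (G : ℝ) ^ (1 - 3 / 2 : ℝ) = (G : ℝ)⁻¹ := by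
    rw [← rpow_add hGR, show (1 - 3 / 2 : ℝ) + (1 - 3 / 2) = -1 by norm_num, rpow_neg_one]
  calc ∑' m, v2Term β θ₀ G L m
      ≤ ∑' m : ℤ × ℤ, latticeTail (3 / 2) G G m.1 * latticeTail (3 / 2) L G m.2 :=
        Summable.tsum_le_tsum hbound (hprod.of_nonneg_of_le (v2Term_nonneg β θ₀ G L) hbound) hprod
    _ = (∑' x, latticeTail (3 / 2) G G x) * ∑' y, latticeTail (3 / 2) L G y :=
        ((summable_latticeTail hs G G).tsum_mul_tsum (summable_latticeTail hs L G) hprod).symm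
    _ ≤ (2 * (3 / 2 / (3 / 2 - 1)) * (G : ℝ)⁻¹ * (G : ℝ) ^ (1 - 3 / 2 : ℝ)) *
          (2 * (3 / 2 / (3 / 2 - 1)) * (L : ℝ)⁻¹ * (G : ℝ) ^ (1 - 3 / 2 : ℝ)) :=
        mul_le_mul (tsum_latticeTail_le hs hG hGR) (tsum_latticeTail_le hs hL hGR)
          (tsum_nonneg (latticeTail_nonneg _ _ _)) (by positivity)
    _ = 36 * ((G : ℝ)⁻¹ * (L : ℝ)⁻¹ * ((G : ℝ) ^ (1 - 3 / 2 : ℝ) * (G : ℝ) ^ (1 - 3 / 2 : ℝ))) := by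
        ring
    _ = 36 / ((G : ℝ) ^ 2 * L) := by
        rw [hG2]; field_simp
end
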